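/- Let $S$ be an associative algebra containing elements $E$, $K$, $K^{-1}$ with $KK^{-1} = 1$. Define linear endomorphisms of $S$ by $(\mathrm{ad}\,E)(x) = Ex - (KxK^{-1})E$. Then for every $r \ge 0$ and every $x \in S$ satisfying $KxK^{-1} = v^c x$ for a scalar $v^c$, one has $(\mathrm{ad}\,E)^r(x) = \sum_{s=0}^r (-1)^s v^{s(r-1+c)} \binom{r}{s}_v E^{r-s} x E^s$, where $\binom{r}{s}_v$ is the Gaussian binomial coefficient. -/
import Mathlib

open scoped BigOperators

/-- The balanced Gaussian binomial coefficient `\binom{a}{t}_v` in `ℚ(v)`. -/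
noncomputable def qbinom (a : ℤ) (t : ℕ) : RatFunc ℚ :=
  ∏ s ∈ Finset.range t,
    (RatFunc.X ^ (a - s) - RatFunc.X ^ (-(a - s))) /
      (RatFunc.X ^ ((s : ℤ) + 1) - RatFunc.X ^ (-((s : ℤ) + 1)))

noncomputable def br (m : ℤ) : RatFunc ℚ := RatFunc.X ^ m - RatFunc.X ^ (-m)

lemma X_pow_ne_one {n : ℕ} (hn : n ≠ 0) : (RatFunc.X : RatFunc ℚ) ^ n ≠ 1 := by
  intro h
  rw [show (RatFunc.X : RatFunc ℚ) = algebraMap (Polynomial ℚ) _ Polynomial.X from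
      (RatFunc.algebraMap_X).symm, ← map_pow,
    ← map_one (algebraMap (Polynomial ℚ) (RatFunc ℚ))] at h
  have := RatFunc.algebraMap_injective ℚ h
  have h1 := congrArg Polynomial.natDegree this
  simp [Polynomial.natDegree_X_pow] at h1
  exact hn h1

lemma X_zpow_ne_one {m : ℤ} (hm : m ≠ 0) : (RatFunc.X : RatFunc ℚ) ^ m ≠ 1 := by
  intro h
  rcases lt_or_gt_of_ne hm with hlt | hgt
  · have h' : (RatFunc.X : RatFunc ℚ) ^ (-m) = 1 := by rw [zpow_neg, h, inv_one]
    rw [← Int.toNat_of_nonneg (by omega : (0:ℤ) ≤ -m), zpow_natCast] at h'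
    exact X_pow_ne_one (by omega) h'
  · rw [← Int.toNat_of_nonneg (by omega : (0:ℤ) ≤ m), zpow_natCast] at h
    exact X_pow_ne_one (by omega) h

lemma br_ne_zero {m : ℤ} (hm : m ≠ 0) : br m ≠ 0 := by
  intro h
  have h2 : (RatFunc.X : RatFunc ℚ) ^ m = RatFunc.X ^ (-m) := by
    unfold br at h; linear_combination h
  have h3 : (RatFunc.X : RatFunc ℚ) ^ (m + m) = 1 := by
    calc (RatFunc.X : RatFunc ℚ) ^ (m + m)
        = RatFunc.X ^ m * RatFunc.X ^ m := zpow_add₀ RatFunc.X_ne_zero m m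
      _ = RatFunc.X ^ m * RatFunc.X ^ (-m) := by rw [← h2]
      _ = RatFunc.X ^ (m + -m) := (zpow_add₀ RatFunc.X_ne_zero m (-m)).symm
      _ = 1 := by simp
  exact X_zpow_ne_one (by omega) h3

lemma qbinom_zero (a : ℤ) : qbinom a 0 = 1 := by simp [qbinom]

lemma qbinom_succ (a : ℤ) (t : ℕ) :
    qbinom a (t + 1) = qbinom a t * (br (a - t) / br ((t : ℤ) + 1)) := by
  rw [qbinom, Finset.prod_range_succ, ← qbinom, br, br]

lemma qbinom_self_succ (r : ℕ) : qbinom (r : ℤ) (r + 1) = 0 := by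
  rw [qbinom]
  refine Finset.prod_eq_zero (Finset.self_mem_range_succ r) ?_
  simp

lemma qbinom_A (r s : ℕ) :
    qbinom (r : ℤ) (s + 1) * br ((s : ℤ) + 1) = qbinom (r : ℤ) s * br ((r : ℤ) - s) := by
  rw [qbinom_succ, mul_assoc, div_mul_cancel₀ _ (br_ne_zero (by omega))]

lemma qbinom_B (r s : ℕ) :
    qbinom ((r : ℤ) + 1) (s + 1) * br ((s : ℤ) + 1) = qbinom (r : ℤ) s * br ((r : ℤ) + 1) := by
  induction s with
  | zero =>
    have e1 : (r:ℤ) + 1 - ((0:ℕ):ℤ) = (r:ℤ) + 1 := by omega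
    rw [qbinom_succ, qbinom_zero, qbinom_zero, one_mul, one_mul, e1]
    exact div_mul_cancel₀ _ (br_ne_zero (by omega))
  | succ t ih =>
    have e1 : (r:ℤ) + 1 - ((t+1:ℕ):ℤ) = (r:ℤ) - t := by omega
    have e2 : ((t+1:ℕ):ℤ) + 1 = (t:ℤ) + 2 := by omega
    have h2 : qbinom (r:ℤ) (t+1) * br ((t:ℤ)+1) = qbinom (r:ℤ) t * br ((r:ℤ) - t) := qbinom_A r t
    have hb1 : br ((t:ℤ)+1) ≠ 0 := br_ne_zero (by omega)
    have hb2 : br ((t:ℤ)+2) ≠ 0 := br_ne_zero (by omega)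
    rw [show t+1+1 = (t+1)+1 from rfl, qbinom_succ, e1, e2, mul_assoc,
      div_mul_cancel₀ _ hb2]
    apply mul_right_cancel₀ hb1
    linear_combination br ((r:ℤ) - (t:ℤ)) * ih - br ((r:ℤ)+1) * h2

lemma X_mul_br (a b : ℤ) :
    (RatFunc.X : RatFunc ℚ) ^ a * br b = RatFunc.X ^ (a + b) - RatFunc.X ^ (a - b) := by
  unfold br
  rw [mul_sub, ← zpow_add₀ RatFunc.X_ne_zero, ← zpow_add₀ RatFunc.X_ne_zero]
  congr 2 <;> omega

lemma SI (r s c : ℤ) :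
    (RatFunc.X : RatFunc ℚ) ^ ((s+1)*(r+c)) * br (r+1)
      = RatFunc.X ^ ((s+1)*(r-1+c)) * br (r - s)
        + (RatFunc.X ^ (2*r+c) * RatFunc.X ^ (s*(r-1+c))) * br (s+1) := by
  rw [← zpow_add₀ RatFunc.X_ne_zero, X_mul_br, X_mul_br, X_mul_br,
    show (s+1)*(r+c) + (r+1) = (2*r+c + s*(r-1+c)) + (s+1) by ring,
    show (s+1)*(r+c) - (r+1) = (s+1)*(r-1+c) - (r - s) by ring,
    show (s+1)*(r-1+c) + (r - s) = (2*r+c + s*(r-1+c)) - (s+1) by ring]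
  try ring

lemma coeff_rec (r s : ℕ) (c : ℤ) :
    (-1 : RatFunc ℚ)^(s+1) * RatFunc.X ^ (((s:ℤ)+1)*((r:ℤ)+c)) * qbinom ((r:ℤ)+1) (s+1)
      = (-1)^(s+1) * RatFunc.X ^ (((s:ℤ)+1)*((r:ℤ)-1+c)) * qbinom (r:ℤ) (s+1)
        - RatFunc.X ^ (2*(r:ℤ)+c) *
            ((-1)^s * RatFunc.X ^ ((s:ℤ)*((r:ℤ)-1+c)) * qbinom (r:ℤ) s) := by
  apply mul_right_cancel₀ (br_ne_zero (show (s:ℤ)+1 ≠ 0 by omega))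
  have hA := qbinom_A r s
  have hB := qbinom_B r s
  have hS := SI (r:ℤ) (s:ℤ) c
  linear_combination ((-1 : RatFunc ℚ))^(s+1) * RatFunc.X ^ (((s:ℤ)+1)*((r:ℤ)+c)) * hB
    - (-1 : RatFunc ℚ)^(s+1) * RatFunc.X ^ (((s:ℤ)+1)*((r:ℤ)-1+c)) * hA
    + (-1 : RatFunc ℚ)^(s+1) * qbinom (r:ℤ) s * hS

/-- Let `S` be an associative `ℚ(v)`-algebra containing `E, K, K⁻¹` with
`K K⁻¹ = K⁻¹ K = 1` and `K E K⁻¹ = v² E`, and define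
`(ad E)(y) = E y - (K y K⁻¹) E`. Then for every `r ≥ 0` and every `K`-weight
element `x` (i.e. `K x K⁻¹ = v^c x`), one has
`(ad E)^r x = ∑_{s=0}^r (-1)^s v^{s(r-1+c)} \binom{r}{s}_v E^{r-s} x E^s`. -/
theorem ad_pow_expansion
    (S : Type*) [Ring S] [Algebra (RatFunc ℚ) S]
    (E K K' : S) (hKK' : K * K' = 1) (hK'K : K' * K = 1)
    (hKE : K * E * K' = (RatFunc.X ^ 2 : RatFunc ℚ) • E)
    (x : S) (c : ℤ) (hx : K * x * K' = ((RatFunc.X : RatFunc ℚ) ^ c) • x)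
    (r : ℕ) :
    (fun y : S => E * y - (K * y * K') * E)^[r] x =
      ∑ s ∈ Finset.range (r + 1),
        ((-1 : RatFunc ℚ) ^ s * RatFunc.X ^ ((s : ℤ) * ((r : ℤ) - 1 + c)) * qbinom (r : ℤ) s) •
          (E ^ (r - s) * x * E ^ s) := by
  have hXne : (RatFunc.X : RatFunc ℚ) ≠ 0 := RatFunc.X_ne_zero
  have hconj_mul : ∀ u v : S, K * (u * v) * K' = (K * u * K') * (K * v * K') := by
    intro u v
    have h1 : (K * u * K') * (K * v * K') = (K * u) * (K' * K) * (v * K') := by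
      noncomm_ring
    rw [h1, hK'K]
    noncomm_ring
  have hEpow : ∀ n : ℕ, K * E ^ n * K' =
      ((RatFunc.X : RatFunc ℚ) ^ (2 * (n : ℤ))) • E ^ n := by
    intro n
    induction n with
    | zero => simp [hKK']
    | succ n ih =>
      rw [pow_succ, hconj_mul, ih, hKE, smul_mul_smul_comm, ← pow_succ]
      congr 1
      rw [show ((RatFunc.X : RatFunc ℚ) ^ 2) = RatFunc.X ^ (2:ℤ) from (zpow_ofNat _ 2).symm,
        ← zpow_add₀ hXne]
      congr 1 <;> omega
  have hterm : ∀ a b : ℕ, K * (E ^ a * x * E ^ b) * K' =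
      ((RatFunc.X : RatFunc ℚ) ^ (2 * (a : ℤ) + c + 2 * (b : ℤ))) • (E ^ a * x * E ^ b) := by
    intro a b
    rw [hconj_mul, hconj_mul, hEpow, hEpow, hx, smul_mul_smul_comm, smul_mul_smul_comm,
      ← zpow_add₀ hXne, ← zpow_add₀ hXne]
  induction r with
  | zero => simp [qbinom_zero]
  | succ r ih =>
    rw [Function.iterate_succ_apply', ih]
    set cf : ℕ → ℕ → RatFunc ℚ := fun n s =>
      (-1 : RatFunc ℚ) ^ s * RatFunc.X ^ ((s : ℤ) * ((n : ℤ) - 1 + c)) * qbinom (n : ℤ) s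
      with hcf
    -- step 1 : multiplication by E on the left
    have step1 : E * (∑ s ∈ Finset.range (r + 1), cf r s • (E ^ (r - s) * x * E ^ s))
        = ∑ s ∈ Finset.range (r + 1), cf r s • (E ^ (r + 1 - s) * x * E ^ s) := by
      rw [Finset.mul_sum]
      refine Finset.sum_congr rfl fun s hs => ?_
      have hsr : s ≤ r := by simpa [Nat.lt_succ_iff] using hs
      rw [mul_smul_comm]
      congr 1
      rw [show r + 1 - s = (r - s) + 1 from by omega, pow_succ']
      noncomm_ring
    -- step 2 : the conjugated sum times E
    have step2 : (K * (∑ s ∈ Finset.range (r + 1), cf r s • (E ^ (r - s) * x * E ^ s)) * K') * E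
        = ∑ s ∈ Finset.range (r + 1),
            (RatFunc.X ^ (2 * (r:ℤ) + c) * cf r s) • (E ^ (r - s) * x * E ^ (s + 1)) := by
      rw [Finset.mul_sum, Finset.sum_mul, Finset.sum_mul]
      refine Finset.sum_congr rfl fun s hs => ?_
      have hsr : s ≤ r := by simpa [Nat.lt_succ_iff] using hs
      rw [mul_smul_comm, smul_mul_assoc, smul_mul_assoc, hterm, smul_mul_assoc, smul_smul]
      rw [show 2 * ((r - s : ℕ) : ℤ) + c + 2 * (s : ℤ) = 2 * (r:ℤ) + c by
        push_cast [Nat.cast_sub hsr]; ring]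
      rw [mul_comm (cf r s)]
      congr 1
      rw [mul_assoc, ← pow_succ]
    rw [step1, step2]
    -- extend the first sum to range (r+2) with a vanishing top term
    have hext : ∑ s ∈ Finset.range (r + 1), cf r s • (E ^ (r + 1 - s) * x * E ^ s)
        = ∑ s ∈ Finset.range (r + 2), cf r s • (E ^ (r + 1 - s) * x * E ^ s) := by
      rw [Finset.sum_range_succ (n := r + 1)]
      have : cf r (r + 1) = 0 := by
        simp [hcf, qbinom_self_succ]
      rw [this, zero_smul, add_zero]
    rw [hext, Finset.sum_range_succ' _ (r + 1),
      Finset.sum_range_succ' (fun s => cf (r+1) s • (E ^ (r + 1 - s) * x * E ^ s)) (r + 1)]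
    have h0 : cf r 0 = cf (r + 1) 0 := by simp [hcf, qbinom_zero]
    rw [h0, add_sub_right_comm]
    congr 1
    rw [← Finset.sum_sub_distrib]
    refine Finset.sum_congr rfl fun s hs => ?_
    rw [Nat.succ_sub_succ, ← sub_smul]
    congr 1
    have := coeff_rec r s c
    simp only [hcf]
    push_cast
    rw [show ((r:ℤ) + 1 - 1 + c) = (r:ℤ) + c by ring]
    linear_combination -this
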